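/- The series ∑_{n=0}^∞ ((1/2)_n)^3/((1)_n^3) · (-1)^n equals (2+√2)/4 · Γ(3/4)² / Γ(7/8)^4. -/

import Mathlib

/-!
Clausen's identity ₂F₁(1/4, 1/4; 1; x)² = ₃F₂(1/2, 1/2, 1/2; 1, 1; x), checked coefficientwise by a
Zeilberger certificate, writes the series as the square of ₂F₁(1/4, 1/4; 1; -1); the Cauchy product
is legitimate because ((1/4)ₙ/n!)² = O(n^(-3/2)).

Kummer's value of ₂F₁(a, a; 1; -1) comes from Euler's integral: (a)ₙ/n! · B(a, 1 - a) is the Beta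
integral of x^(a+n-1) (1-x)^(-a), and summing the binomial series of (1 + x)^(-a) under the integral
leaves ∫₀¹ x^(a-1) (1-x²)^(-a) dx = B(a/2, 1 - a)/2 (substitute u = x²). At a = 1/4, the
reflection formula at 1/8 and 1/4 together with sin²(π/8) = (2 - √2)/4 gives the closed form.
-/

open Real

noncomputable def poch (a : ℝ) (n : ℕ) : ℝ := (ascPochhammer ℝ n).eval a

open MeasureTheory Set
open scoped Nat

@[simp]
lemma poch_zero (a : ℝ) : poch a 0 = 1 := by
  simp [poch]

lemma poch_succ (a : ℝ) (n : ℕ) : poch a (n + 1) = poch a n * (a + n) := by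
  simp [poch, ascPochhammer_succ_right]

lemma poch_pos {a : ℝ} (ha : 0 < a) (n : ℕ) : 0 < poch a n := by
  induction n with
  | zero => simp
  | succ n ih => rw [poch_succ]; positivity

lemma poch_one (n : ℕ) : poch 1 n = n ! := by
  induction n with
  | zero => simp
  | succ n ih => rw [poch_succ, ih, Nat.factorial_succ]; push_cast; ring

lemma Gamma_add_nat_eq_poch_mul_Gamma {a : ℝ} (ha : 0 < a) (n : ℕ) :
    Gamma (a + n) = poch a n * Gamma a := by
  induction n with
  | zero => simp
  | succ n ih =>
    rw [Nat.cast_succ, ← add_assoc, Gamma_add_one (by positivity), ih, poch_succ]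
    ring

lemma Ring.choose_neg_eq_neg_one_pow_mul_poch_div (a : ℝ) (n : ℕ) :
    Ring.choose (-a) n = (-1) ^ n * poch a n / n ! := by
  rw [Ring.choose_eq_smul, Polynomial.descPochhammer_smeval_eq_ascPochhammer,
    Polynomial.ascPochhammer_smeval_cast, Polynomial.ascPochhammer_smeval_eq_eval,
    show -a - n + 1 = -(a + n - 1) by ring, ascPochhammer_eval_neg_eq_descPochhammer,
    descPochhammer_eval_eq_ascPochhammer, poch, show a + n - 1 - n + 1 = a by ring, smul_eq_mul]
  ring

noncomputable def pochDivFact (a : ℝ) (n : ℕ) : ℝ := poch a n / n !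

@[simp]
lemma pochDivFact_zero (a : ℝ) : pochDivFact a 0 = 1 := by
  simp [pochDivFact]

lemma pochDivFact_succ (a : ℝ) (n : ℕ) :
    pochDivFact a (n + 1) = pochDivFact a n * (a + n) / (n + 1) := by
  simp only [pochDivFact, poch_succ, Nat.factorial_succ, Nat.cast_mul, Nat.cast_succ]
  field_simp

lemma pochDivFact_pos {a : ℝ} (ha : 0 < a) (n : ℕ) : 0 < pochDivFact a n :=
  div_pos (poch_pos ha n) (by positivity)

lemma hasSum_pochDivFact_mul_neg_pow (a : ℝ) {x : ℝ} (hx : |x| < 1) :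
    HasSum (fun n ↦ pochDivFact a n * (-x) ^ n) ((1 + x) ^ (-a)) := by
  have hx' : x ∈ Metric.eball (0 : ℝ) 1 := by simpa [Metric.mem_eball, edist_dist] using hx
  have h := Real.one_add_rpow_hasFPowerSeriesOnBall_zero (a := -a) |>.hasSum hx'
  simp only [binomialSeries, FormalMultilinearSeries.ofScalars_apply_eq, smul_eq_mul, zero_add,
    Ring.choose_neg_eq_neg_one_pow_mul_poch_div] at h
  have e (n : ℕ) : pochDivFact a n * (-x) ^ n = (-1) ^ n * poch a n / n ! * x ^ n := by
    rw [pochDivFact, neg_pow]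
    ring
  simpa only [e] using h

section Beta

variable {a b : ℝ}

lemma ofReal_cpow_mul_one_sub_cpow {x : ℝ} (hx0 : 0 ≤ x) (hx1 : x ≤ 1) :
    (x : ℂ) ^ ((a : ℂ) - 1) * (1 - (x : ℂ)) ^ ((b : ℂ) - 1) =
      ((x ^ (a - 1) * (1 - x) ^ (b - 1) : ℝ) : ℂ) := by
  rw [Complex.ofReal_mul, Complex.ofReal_cpow hx0, Complex.ofReal_cpow (by linarith)]
  push_cast
  rfl

lemma integrableOn_rpow_mul_one_sub_rpow (ha : 0 < a) (hb : 0 < b) :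
    IntegrableOn (fun x ↦ x ^ (a - 1) * (1 - x) ^ (b - 1)) (Ioo (0 : ℝ) 1) := by
  have h := Complex.betaIntegral_convergent (u := a) (v := b) (by simpa) (by simpa)
  rw [intervalIntegrable_iff_integrableOn_Ioo_of_le zero_le_one] at h
  refine IntegrableOn.congr_fun h.re (fun x hx ↦ ?_) measurableSet_Ioo
  simp only [ofReal_cpow_mul_one_sub_cpow hx.1.le hx.2.le, RCLike.re_to_complex, Complex.ofReal_re]

lemma integral_rpow_mul_one_sub_rpow (ha : 0 < a) (hb : 0 < b) :
    ∫ x in Ioo 0 1, x ^ (a - 1) * (1 - x) ^ (b - 1) = Gamma a * Gamma b / Gamma (a + b) := by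
  have h := Complex.Gamma_mul_Gamma_eq_betaIntegral (s := a) (t := b) (by simpa) (by simpa)
  have hbeta : Complex.betaIntegral a b =
      ((∫ x in Ioo 0 1, x ^ (a - 1) * (1 - x) ^ (b - 1) : ℝ) : ℂ) := by
    rw [Complex.betaIntegral, intervalIntegral.integral_of_le zero_le_one,
      integral_Ioc_eq_integral_Ioo, ← integral_complex_ofReal]
    exact setIntegral_congr_fun measurableSet_Ioo fun x hx ↦
      ofReal_cpow_mul_one_sub_cpow hx.1.le hx.2.le
  rw [hbeta, ← Complex.ofReal_add, Complex.Gamma_ofReal, Complex.Gamma_ofReal,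
    Complex.Gamma_ofReal] at h
  rw [eq_div_iff (Gamma_pos_of_pos (by linarith)).ne']
  exact_mod_cast (h.trans (mul_comm _ _)).symm

end Beta

lemma integral_rpow_mul_one_sub_rpow_eq_pochDivFact {a : ℝ} (ha0 : 0 < a) (ha1 : a < 1) (n : ℕ) :
    ∫ x in Ioo 0 1, x ^ (a + n - 1) * (1 - x) ^ (-a) =
      pochDivFact a n * (Gamma a * Gamma (1 - a)) := by
  have h := integral_rpow_mul_one_sub_rpow (a := a + n) (b := 1 - a) (by positivity) (by linarith)
  rw [sub_sub_cancel_left, show a + n + (1 - a) = (n : ℝ) + 1 by ring,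
    Gamma_add_nat_eq_poch_mul_Gamma ha0, Gamma_nat_eq_factorial] at h
  rw [h, pochDivFact]
  ring

lemma integral_Ioo_comp_sq (f : ℝ → ℝ) :
    ∫ x in Ioo 0 1, 2 * x * f (x ^ 2) = ∫ u in Ioo 0 1, f u := by
  have himage : (fun x : ℝ ↦ x ^ 2) '' Ioo 0 1 = Ioo 0 1 := by
    ext y
    constructor
    · rintro ⟨x, ⟨hx0, hx1⟩, rfl⟩
      exact ⟨by positivity, by nlinarith⟩
    · rintro ⟨hy0, hy1⟩
      exact ⟨√y, ⟨sqrt_pos.2 hy0, (sqrt_lt' one_pos).2 (by simpa using hy1)⟩, sq_sqrt hy0.le⟩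
  have h := integral_image_eq_integral_abs_deriv_smul (measurableSet_Ioo (a := (0 : ℝ)) (b := 1))
    (fun x _ ↦ (hasDerivAt_pow 2 x).hasDerivWithinAt)
    ((pow_left_strictMonoOn₀ two_ne_zero).injOn.mono fun x hx ↦ hx.1.le) f
  rw [himage] at h
  rw [h]
  refine setIntegral_congr_fun measurableSet_Ioo fun x hx ↦ ?_
  rw [abs_of_pos (by simpa using hx.1), smul_eq_mul]
  push_cast
  ring

section Kummer

variable {a : ℝ}

lemma integral_rpow_mul_one_sub_sq_rpow (ha0 : 0 < a) (ha1 : a < 1) :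
    ∫ x in Ioo 0 1, x ^ (a - 1) * (1 - x ^ 2) ^ (-a) =
      Gamma (a / 2) * Gamma (1 - a) / (2 * Gamma (1 - a / 2)) := by
  have hpt : EqOn (fun x : ℝ ↦ x ^ (a - 1) * (1 - x ^ 2) ^ (-a))
      (fun x : ℝ ↦ 2⁻¹ * (2 * x * ((x ^ 2) ^ (a / 2 - 1) * (1 - x ^ 2) ^ (1 - a - 1))))
      (Ioo (0 : ℝ) 1) := by
    intro x hx
    have hsq : (x ^ 2) ^ (a / 2 - 1) = x ^ (a - 2) := by
      rw [← rpow_natCast, ← rpow_mul hx.1.le]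
      congr 1
      push_cast
      ring
    have hx1 : x ^ (a - 1) = x * x ^ (a - 2) := by
      rw [← rpow_one_add' hx.1.le (by linarith)]
      congr 1
      ring
    simp only [hsq, hx1, sub_sub_cancel_left]
    ring
  rw [setIntegral_congr_fun measurableSet_Ioo hpt, integral_const_mul,
    integral_Ioo_comp_sq fun u ↦ u ^ (a / 2 - 1) * (1 - u) ^ (1 - a - 1),
    integral_rpow_mul_one_sub_rpow (by positivity) (by linarith),
    show a / 2 + (1 - a) = 1 - a / 2 by ring]
  field_simp

lemma tsum_pochDivFact_sq_mul_neg_one_pow_mul_beta (ha0 : 0 < a) (ha1 : a < 1)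
    (hsum : Summable fun n ↦ pochDivFact a n ^ 2) :
    (∑' n, pochDivFact a n ^ 2 * (-1) ^ n) * (Gamma a * Gamma (1 - a)) =
      ∫ x in Ioo 0 1, x ^ (a - 1) * (1 - x ^ 2) ^ (-a) := by
  set F : ℕ → ℝ → ℝ := fun n x ↦ (-1) ^ n * pochDivFact a n * (x ^ (a + n - 1) * (1 - x) ^ (-a))
  have hF_int (n : ℕ) : IntegrableOn (F n) (Ioo 0 1) := by
    have h := integrableOn_rpow_mul_one_sub_rpow (a := a + n) (b := 1 - a) (by positivity)
      (by linarith)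
    rw [sub_sub_cancel_left] at h
    exact h.const_mul _
  have hF_norm (n : ℕ) :
      ∫ x in Ioo 0 1, ‖F n x‖ = pochDivFact a n ^ 2 * (Gamma a * Gamma (1 - a)) := by
    rw [setIntegral_congr_fun measurableSet_Ioo
        (g := fun x ↦ pochDivFact a n * (x ^ (a + n - 1) * (1 - x) ^ (-a))) fun x hx ↦ ?_,
      integral_const_mul, integral_rpow_mul_one_sub_rpow_eq_pochDivFact ha0 ha1]
    · ring
    have : 0 < 1 - x := by linarith [hx.2]
    simp only [F, norm_mul, norm_pow, norm_neg, norm_one, one_pow, one_mul, Real.norm_eq_abs,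
      abs_of_pos (pochDivFact_pos ha0 n), abs_of_pos (rpow_pos_of_pos hx.1 _),
      abs_of_pos (rpow_pos_of_pos this _)]
  have hF_sum (x : ℝ) (hx : x ∈ Ioo 0 1) :
      ∑' n, F n x = x ^ (a - 1) * (1 - x ^ 2) ^ (-a) := by
    have hx1 : |x| < 1 := abs_lt.2 ⟨by linarith [hx.1], hx.2⟩
    have hterm (n : ℕ) : F n x = pochDivFact a n * (-x) ^ n * (x ^ (a - 1) * (1 - x) ^ (-a)) := by
      simp only [F]
      rw [show a + n - 1 = a - 1 + n by ring, rpow_add hx.1, rpow_natCast, neg_pow]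
      ring
    rw [tsum_congr hterm, ((hasSum_pochDivFact_mul_neg_pow a hx1).mul_right _).tsum_eq,
      show 1 - x ^ 2 = (1 - x) * (1 + x) by ring,
      mul_rpow (by linarith [hx.2]) (by linarith [hx.1])]
    ring
  have hF_int_eq (n : ℕ) : ∫ x in Ioo 0 1, F n x =
      pochDivFact a n ^ 2 * (-1) ^ n * (Gamma a * Gamma (1 - a)) := by
    rw [integral_const_mul, integral_rpow_mul_one_sub_rpow_eq_pochDivFact ha0 ha1]
    ring
  rw [← tsum_mul_right, ← tsum_congr hF_int_eq, ← setIntegral_congr_fun measurableSet_Ioo hF_sum]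
  exact integral_tsum_of_summable_integral_norm hF_int
    ((hsum.mul_right (Gamma a * Gamma (1 - a))).congr fun n ↦ (hF_norm n).symm)

lemma tsum_pochDivFact_sq_mul_neg_one_pow (ha0 : 0 < a) (ha1 : a < 1)
    (hsum : Summable fun n ↦ pochDivFact a n ^ 2) :
    ∑' n, pochDivFact a n ^ 2 * (-1) ^ n = Gamma (a / 2) / (2 * Gamma a * Gamma (1 - a / 2)) := by
  have h := tsum_pochDivFact_sq_mul_neg_one_pow_mul_beta ha0 ha1 hsum
  rw [integral_rpow_mul_one_sub_sq_rpow ha0 ha1] at h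
  have := Gamma_pos_of_pos ha0
  have := Gamma_pos_of_pos (sub_pos.2 ha1)
  have := Gamma_pos_of_pos (by linarith : 0 < 1 - a / 2)
  field_simp at h ⊢
  linear_combination h

end Kummer

section Clausen

local notation "A" => pochDivFact (1 / 4)

-- Zeilberger's certificate for the coefficients of Clausen's identity at a = b = 1/4.
noncomputable def clausenCertificate (n k : ℕ) : ℝ :=
  -8 * k ^ 2 * (3 * n - 2 * k + 3) * (A k * A (n + 1 - k)) ^ 2

lemma clausenCertificate_sub {n k : ℕ} (hk : k ≤ n) :
    clausenCertificate n (k + 1) - clausenCertificate n k =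
      (2 * n + 2) ^ 3 * (A k * A (n + 1 - k)) ^ 2 - (2 * n + 1) ^ 3 * (A k * A (n - k)) ^ 2 := by
  obtain ⟨j, rfl⟩ := Nat.exists_eq_add_of_le hk
  rw [clausenCertificate, clausenCertificate, show k + j + 1 - (k + 1) = j by omega,
    show k + j + 1 - k = j + 1 by omega, Nat.add_sub_cancel_left, pochDivFact_succ,
    pochDivFact_succ]
  push_cast
  field_simp
  ring

lemma sum_clausen_recurrence (n : ℕ) :
    (2 * n + 2) ^ 3 * ∑ k ∈ Finset.range (n + 1 + 1), (A k * A (n + 1 - k)) ^ 2 =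
      (2 * n + 1) ^ 3 * ∑ k ∈ Finset.range (n + 1), (A k * A (n - k)) ^ 2 := by
  have htele := Finset.sum_range_sub (clausenCertificate n) (n + 1)
  rw [Finset.sum_congr rfl fun k hk ↦ clausenCertificate_sub (Finset.mem_range_succ_iff.1 hk),
    Finset.sum_sub_distrib, ← Finset.mul_sum, ← Finset.mul_sum] at htele
  rw [Finset.sum_range_succ, Nat.sub_self, pochDivFact_zero, mul_add]
  simp only [clausenCertificate, Nat.sub_self, CharP.cast_eq_zero, pochDivFact_zero] at htele
  push_cast at htele
  linear_combination htele

lemma sum_clausen (n : ℕ) :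
    ∑ k ∈ Finset.range (n + 1), (A k * A (n - k)) ^ 2 = pochDivFact (1 / 2) n ^ 3 := by
  induction n with
  | zero => simp
  | succ n ih =>
    have h := sum_clausen_recurrence n
    rw [ih] at h
    refine mul_left_cancel₀ (by positivity : (2 * n + 2 : ℝ) ^ 3 ≠ 0) ?_
    rw [h, pochDivFact_succ]
    field_simp
    ring

lemma pochDivFact_quarter_pow_four_mul_le (n : ℕ) : A n ^ 4 * (4 * n + 1) ^ 3 ≤ 1 := by
  induction n with
  | zero => simp
  | succ n ih =>
    -- with m = 4n + 3 this is (m - 2)(m + 2)³ ≤ (m + 1)⁴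
    have hpoly : (4 * n + 1) * (4 * n + 5) ^ 3 ≤ (4 * n + 4 : ℝ) ^ 4 := by
      nlinarith [sq_nonneg (n : ℝ)]
    calc A (n + 1) ^ 4 * (4 * (n + 1 : ℕ) + 1) ^ 3
        = A n ^ 4 * (4 * n + 1) ^ 3 * ((4 * n + 1) * (4 * n + 5) ^ 3 / (4 * n + 4) ^ 4) := by
          rw [pochDivFact_succ]
          push_cast
          field_simp
          ring
      _ ≤ 1 * 1 :=
          mul_le_mul ih (div_le_one_of_le₀ hpoly (by positivity)) (by positivity) zero_le_one
      _ = 1 := one_mul 1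

lemma summable_pochDivFact_quarter_sq : Summable fun n ↦ A n ^ 2 := by
  refine ((summable_one_div_nat_add_rpow (1 / 4) (3 / 2)).2 (by norm_num)).of_nonneg_of_le
    (fun n ↦ sq_nonneg _) fun n ↦ ?_
  rw [abs_of_pos (by positivity), le_div_iff₀ (by positivity)]
  have hsq : (A n ^ 2 * (n + 1 / 4 : ℝ) ^ (3 / 2 : ℝ)) ^ 2 = A n ^ 4 * (4 * n + 1) ^ 3 / 64 := by
    rw [mul_pow, ← rpow_natCast ((n + 1 / 4 : ℝ) ^ (3 / 2 : ℝ)) 2, ← rpow_mul (by positivity),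
      show (3 / 2 : ℝ) * (2 : ℕ) = (3 : ℕ) by norm_num, rpow_natCast]
    ring
  refine (pow_le_one_iff_of_nonneg (by positivity) two_ne_zero).1 ?_
  rw [hsq]
  linarith [pochDivFact_quarter_pow_four_mul_le n]

lemma tsum_pochDivFact_half_cube_mul_neg_one_pow :
    ∑' n, pochDivFact (1 / 2) n ^ 3 * (-1) ^ n = (∑' n, A n ^ 2 * (-1) ^ n) ^ 2 := by
  have hnorm : Summable fun n ↦ ‖A n ^ 2 * (-1 : ℝ) ^ n‖ :=
    summable_pochDivFact_quarter_sq.congr fun n ↦ by simp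
  rw [sq, tsum_mul_tsum_eq_tsum_sum_range_of_summable_norm hnorm hnorm]
  refine tsum_congr fun n ↦ ?_
  rw [← sum_clausen, Finset.sum_mul]
  refine Finset.sum_congr rfl fun k hk ↦ ?_
  rw [← Nat.add_sub_of_le (Finset.mem_range_succ_iff.1 hk), pow_add, Nat.add_sub_cancel_left]
  ring

end Clausen

lemma sq_Gamma_one_eighth_div :
    (Gamma (1 / 8) / (2 * Gamma (1 / 4) * Gamma (7 / 8))) ^ 2 =
      (2 + √2) / 4 * Gamma (3 / 4) ^ 2 / Gamma (7 / 8) ^ 4 := by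
  have h8 : Gamma (1 / 8) * Gamma (7 / 8) = π / sin (π / 8) := by
    rw [show (7 / 8 : ℝ) = 1 - 1 / 8 by norm_num, Gamma_mul_Gamma_one_sub]
    ring_nf
  have h4 : Gamma (1 / 4) * Gamma (3 / 4) = π / (√2 / 2) := by
    rw [← sin_pi_div_four, show (3 / 4 : ℝ) = 1 - 1 / 4 by norm_num, Gamma_mul_Gamma_one_sub]
    ring_nf
  have hs2 : √2 ^ 2 = 2 := sq_sqrt zero_le_two
  have hsin : sin (π / 8) ^ 2 = (2 - √2) / 4 := by
    rw [sin_pi_div_eight, div_pow, sq_sqrt (by nlinarith [hs2, sqrt_nonneg 2])]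
    ring
  have hspos : 0 < sin (π / 8) := sin_pos_of_pos_of_lt_pi (by positivity) (by linarith [pi_pos])
  have := Gamma_pos_of_pos (by norm_num : (0 : ℝ) < 3 / 4)
  have := Gamma_pos_of_pos (by norm_num : (0 : ℝ) < 7 / 8)
  calc (Gamma (1 / 8) / (2 * Gamma (1 / 4) * Gamma (7 / 8))) ^ 2
      = (Gamma (1 / 8) * Gamma (7 / 8)) ^ 2 / (4 * (Gamma (1 / 4) * Gamma (3 / 4)) ^ 2) *
          Gamma (3 / 4) ^ 2 / Gamma (7 / 8) ^ 4 := by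
        field_simp
        ring
    _ = (2 + √2) / 4 * Gamma (3 / 4) ^ 2 / Gamma (7 / 8) ^ 4 := by
        rw [h8, h4]
        congr 2
        field_simp
        linear_combination (-4 * (2 + √2)) * hsin + 2 * hs2

theorem stmt_7 :
    ∑' n : ℕ, (poch (1/2) n * poch (1/2) n * poch (1/2) n) / (poch 1 n)^3 * ((1:ℝ)) * ((-1:ℝ))^n = (2 + Real.sqrt 2)/4 * (Real.Gamma (3/4))^2 / (Real.Gamma (7/8))^4 := by
  have hterm (n : ℕ) : poch (1 / 2) n * poch (1 / 2) n * poch (1 / 2) n / poch 1 n ^ 3 * 1 *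
      (-1) ^ n = pochDivFact (1 / 2) n ^ 3 * (-1) ^ n := by
    rw [poch_one, pochDivFact]
    ring
  rw [tsum_congr hterm, tsum_pochDivFact_half_cube_mul_neg_one_pow,
    tsum_pochDivFact_sq_mul_neg_one_pow (by norm_num) (by norm_num)
      summable_pochDivFact_quarter_sq,
    show (1 / 4 : ℝ) / 2 = 1 / 8 by norm_num, show 1 - (1 / 8 : ℝ) = 7 / 8 by norm_num]
  exact sq_Gamma_one_eighth_div
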